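/- arXiv:cs/0402044 — 9 statements merged into one kernel-verified Lean document; each statement's English description precedes it below -/
import Mathlib

section
/- For every integer k ≥ 1, the function u^(k) : [0,1] → [0,1] defined by u^(k)(x) = x if (k+1)·x is an integer, and u^(k)(x) = ⌊(k+1)·x⌋/k otherwise, is a dual feasible function. -/
/-!
Write `y = (k+1)x` and `⌊y⌋` for its floor. Every value satisfies `u^(k)(x) ≤ ⌊y⌋ / k`
(at integer `y` it equals `y/(k+1)`). If all `yⱼ` of a family are integers, `u^(k)` is the
identity on it and there is nothing to prove. Otherwise `∑ ⌊yⱼ⌋ < ∑ yⱼ ≤ k + 1`, so the integer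
`∑ ⌊yⱼ⌋` is at most `k`, and `∑ u^(k)(xⱼ) ≤ (∑ ⌊yⱼ⌋) / k ≤ 1`.
-/

/-- A function `u : [0,1] → [0,1]` is *dual feasible* if it maps `[0,1]` into `[0,1]`
and for every finite family `x₁, …, xₙ` of numbers in `[0,1]` with `∑ xⱼ ≤ 1`
one has `∑ u (xⱼ) ≤ 1`. -/
def DualFeasible (u : ℝ → ℝ) : Prop :=
  (∀ x ∈ Set.Icc (0 : ℝ) 1, u x ∈ Set.Icc (0 : ℝ) 1) ∧
  ∀ (n : ℕ) (x : Fin n → ℝ), (∀ j, x j ∈ Set.Icc (0 : ℝ) 1) →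
    ∑ j, x j ≤ 1 → ∑ j, u (x j) ≤ 1

/-- The bound `u x ≤ 1` is the packing inequality for the one-element family `x`. -/
theorem DualFeasible.of_nonneg_of_sum_le_one {u : ℝ → ℝ}
    (nonneg : ∀ x ∈ Set.Icc (0 : ℝ) 1, 0 ≤ u x)
    (sum_le_one : ∀ (n : ℕ) (x : Fin n → ℝ), (∀ j, x j ∈ Set.Icc (0 : ℝ) 1) →
      ∑ j, x j ≤ 1 → ∑ j, u (x j) ≤ 1) :
    DualFeasible u := by
  refine ⟨fun x hx => ⟨nonneg x hx, ?_⟩, sum_le_one⟩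
  simpa using sum_le_one 1 (fun _ => x) (fun _ => hx) (by simpa using hx.2)

theorem Finset.sum_floor_le_of_not_int {ι : Type*} {s : Finset ι} {y : ι → ℝ} {m : ℤ} {j : ι}
    (hsum : ∑ i ∈ s, y i ≤ m + 1) (hj : j ∈ s) (hyj : ∀ n : ℤ, y j ≠ n) :
    ∑ i ∈ s, ⌊y i⌋ ≤ m := by
  have hlt : ((∑ i ∈ s, ⌊y i⌋ : ℤ) : ℝ) < m + 1 := by
    push_cast
    calc ∑ i ∈ s, (⌊y i⌋ : ℝ) < ∑ i ∈ s, y i :=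
          Finset.sum_lt_sum (fun i _ => Int.floor_le _)
            ⟨j, hj, (Int.floor_le _).lt_of_ne fun h => hyj _ h.symm⟩
      _ ≤ m + 1 := hsum
  exact Int.lt_add_one_iff.mp (by exact_mod_cast hlt)

open Classical in
/-- The paper's `u^(k)`. -/
noncomputable def uDFF (k : ℕ) (x : ℝ) : ℝ :=
  if ∃ m : ℤ, ((k : ℝ) + 1) * x = (m : ℝ) then x
  else (⌊((k : ℝ) + 1) * x⌋ : ℝ) / (k : ℝ)

namespace uDFF

variable {k : ℕ} {x : ℝ}

theorem nonneg (hx : 0 ≤ x) : 0 ≤ uDFF k x := by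
  unfold uDFF
  split_ifs
  · exact hx
  · exact div_nonneg (by exact_mod_cast Int.floor_nonneg.mpr (by positivity)) k.cast_nonneg

theorem le_floor_div (hk : 1 ≤ k) (hx : 0 ≤ x) :
    uDFF k x ≤ (⌊((k : ℝ) + 1) * x⌋ : ℝ) / k := by
  have hk' : (0 : ℝ) < k := by exact_mod_cast hk
  unfold uDFF
  split_ifs with hint
  · obtain ⟨m, hm⟩ := hint
    rw [hm, Int.floor_intCast, le_div_iff₀ hk']
    nlinarith
  · exact le_rfl

theorem sum_le_one (hk : 1 ≤ k) (n : ℕ) (x : Fin n → ℝ) (hx : ∀ j, x j ∈ Set.Icc (0 : ℝ) 1)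
    (hsum : ∑ j, x j ≤ 1) : ∑ j, uDFF k (x j) ≤ 1 := by
  by_cases hint : ∀ j, ∃ m : ℤ, ((k : ℝ) + 1) * x j = m
  · calc ∑ j, uDFF k (x j) = ∑ j, x j := Finset.sum_congr rfl fun j _ => if_pos (hint j)
      _ ≤ 1 := hsum
  push Not at hint
  obtain ⟨j, hj⟩ := hint
  have hk' : (0 : ℝ) < k := by exact_mod_cast hk
  have hfloor : ∑ i, ⌊((k : ℝ) + 1) * x i⌋ ≤ k := by
    refine Finset.sum_floor_le_of_not_int ?_ (Finset.mem_univ j) hj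
    rw [← Finset.mul_sum]
    push_cast
    nlinarith
  calc ∑ i, uDFF k (x i) ≤ ∑ i, (⌊((k : ℝ) + 1) * x i⌋ : ℝ) / k :=
        Finset.sum_le_sum fun i _ => le_floor_div hk (hx i).1
    _ = ((∑ i, ⌊((k : ℝ) + 1) * x i⌋ : ℤ) : ℝ) / k := by push_cast; rw [Finset.sum_div]
    _ ≤ 1 := (div_le_one hk').mpr (by exact_mod_cast hfloor)

end uDFF

open Classical in
/-- For every integer `k ≥ 1`, the function `u^(k)` with `u^(k)(x) = x` if `(k+1)·x ∈ ℤ`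
and `u^(k)(x) = ⌊(k+1)·x⌋ / k` otherwise, is a dual feasible function. -/
theorem u_k_dualFeasible (k : ℕ) (hk : 1 ≤ k) :
    DualFeasible (fun x : ℝ =>
      if ∃ m : ℤ, ((k : ℝ) + 1) * x = (m : ℝ) then x
      else (⌊((k : ℝ) + 1) * x⌋ : ℝ) / (k : ℝ)) :=
  DualFeasible.of_nonneg_of_sum_le_one (fun _ hx => uDFF.nonneg hx.1) (uDFF.sum_le_one hk)
end

section
/- For every ε ∈ [0,1/2], the function U^(ε) : [0,1] → [0,1] defined by U^(ε)(x) = 1 if x > 1−ε, U^(ε)(x) = x if ε ≤ x ≤ 1−ε, and U^(ε)(x) = 0 if x < ε, is a dual feasible function. -/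
/-!
If some `xⱼ` exceeds `1 - ε`, the remaining `xᵢ` sum to less than `ε ≤ 1 - ε`, so `U^(ε)` kills them
and `∑ U^(ε)(xᵢ) = 1`. Otherwise every `xⱼ ≤ 1 - ε`, where `U^(ε)(x) ≤ x`, so
`∑ U^(ε)(xⱼ) ≤ ∑ xⱼ ≤ 1`.
-/

noncomputable def uEps (ε x : ℝ) : ℝ :=
  if 1 - ε < x then 1 else if x < ε then 0 else x

lemma uEps_mem_Icc {ε x : ℝ} (hx : x ∈ Set.Icc (0 : ℝ) 1) : uEps ε x ∈ Set.Icc (0 : ℝ) 1 := by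
  unfold uEps
  split_ifs <;> simp [hx.1, hx.2]

lemma uEps_le_self {ε x : ℝ} (hx₀ : 0 ≤ x) (hx : x ≤ 1 - ε) : uEps ε x ≤ x := by
  unfold uEps
  split_ifs <;> linarith

lemma uEps_eq_zero {ε x : ℝ} (hε : ε ≤ 1 / 2) (hx : x < ε) : uEps ε x = 0 := by
  rw [uEps, if_neg (by linarith), if_pos hx]

lemma uEps_eq_one {ε x : ℝ} (hx : 1 - ε < x) : uEps ε x = 1 := if_pos hx

lemma sum_uEps_eq_one_of_one_sub_lt {ε : ℝ} (hε : ε ≤ 1 / 2) {ι : Type*} {s : Finset ι} {x : ι → ℝ}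
    (hx : ∀ i ∈ s, 0 ≤ x i) (hsum : ∑ i ∈ s, x i ≤ 1) {j : ι} (hj : j ∈ s)
    (hbig : 1 - ε < x j) : ∑ i ∈ s, uEps ε (x i) = 1 := by
  rw [Finset.sum_eq_single_of_mem j hj, uEps_eq_one hbig]
  intro i hi hij
  have hpair : x i + x j ≤ ∑ k ∈ s, x k := Finset.add_le_sum hx hi hj hij
  exact uEps_eq_zero hε (by linarith)

lemma sum_uEps_le_sum_of_forall_le {ε : ℝ} {ι : Type*} {s : Finset ι} {x : ι → ℝ}
    (hx : ∀ i ∈ s, 0 ≤ x i) (hsmall : ∀ i ∈ s, x i ≤ 1 - ε) :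
    ∑ i ∈ s, uEps ε (x i) ≤ ∑ i ∈ s, x i :=
  Finset.sum_le_sum fun i hi ↦ uEps_le_self (hx i hi) (hsmall i hi)

open Classical in
/-- For every `ε ∈ [0,1/2]`, the function `U^(ε)` with `U^(ε)(x) = 1` for `x > 1 - ε`,
`U^(ε)(x) = x` for `ε ≤ x ≤ 1 - ε`, and `U^(ε)(x) = 0` for `x < ε`,
is a dual feasible function. -/
theorem U_eps_dualFeasible (ε : ℝ) (hε : ε ∈ Set.Icc (0 : ℝ) (1 / 2)) :
    DualFeasible (fun x : ℝ =>
      if 1 - ε < x then 1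
      else if x < ε then 0
      else x) := by
  show DualFeasible (uEps ε)
  refine ⟨fun x hx ↦ uEps_mem_Icc hx, fun n x hx hsum ↦ ?_⟩
  have hx₀ : ∀ j ∈ Finset.univ, 0 ≤ x j := fun j _ ↦ (hx j).1
  by_cases hbig : ∃ j, 1 - ε < x j
  · obtain ⟨j, hj⟩ := hbig
    exact (sum_uEps_eq_one_of_one_sub_lt hε.2 hx₀ hsum (Finset.mem_univ j) hj).le
  · simp only [not_exists, not_lt] at hbig
    exact (sum_uEps_le_sum_of_forall_le hx₀ fun j _ ↦ hbig j).trans hsum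
end

section
/- For every ε ∈ (0,1/2), the function φ^(ε) : [0,1] → [0,1] defined by φ^(ε)(x) = 1 − ⌊(1−x)/ε⌋/⌊1/ε⌋ for x > 1/2, φ^(ε)(x) = 1/⌊1/ε⌋ for ε ≤ x ≤ 1/2, and φ^(ε)(x) = 0 for x < ε, is a dual feasible function. -/
open Finset

noncomputable def phiEps (ε x : ℝ) : ℝ :=
  if 1 / 2 < x then 1 - (⌊(1 - x) / ε⌋ : ℝ) / (⌊1 / ε⌋ : ℝ)
  else if ε ≤ x then 1 / (⌊1 / ε⌋ : ℝ)
  else 0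

section

variable {ε x : ℝ}

lemma phiEps_of_half_lt (hx : 1 / 2 < x) :
    phiEps ε x = 1 - (⌊(1 - x) / ε⌋ : ℝ) / (⌊1 / ε⌋ : ℝ) :=
  if_pos hx

lemma phiEps_of_le_half (hx : x ≤ 1 / 2) :
    phiEps ε x = if ε ≤ x then 1 / (⌊1 / ε⌋ : ℝ) else 0 :=
  if_neg hx.not_gt

lemma one_le_floor_one_div (hε0 : 0 < ε) (hε1 : ε ≤ 1) : (1 : ℝ) ≤ ⌊1 / ε⌋ := by
  exact_mod_cast Int.le_floor.2 (by simpa using one_le_one_div hε0 hε1)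

lemma floor_div_le_floor_one_div (hε : 0 < ε) (hx : x ≤ 1) : ⌊x / ε⌋ ≤ ⌊1 / ε⌋ :=
  Int.floor_le_floor (by gcongr)

lemma phiEps_mem_Icc (hε0 : 0 < ε) (hε1 : ε ≤ 1) (hx : x ∈ Set.Icc (0 : ℝ) 1) :
    phiEps ε x ∈ Set.Icc (0 : ℝ) 1 := by
  have hm := one_le_floor_one_div hε0 hε1
  rcases le_or_gt x (1 / 2) with hsmall | hbig
  · rw [phiEps_of_le_half hsmall]
    split_ifs
    · exact ⟨by positivity, (div_le_one (by linarith)).2 hm⟩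
    · exact ⟨le_rfl, zero_le_one⟩
  · rw [phiEps_of_half_lt hbig]
    have hk0 : (0 : ℝ) ≤ ⌊(1 - x) / ε⌋ := by
      exact_mod_cast Int.floor_nonneg.2 (div_nonneg (by linarith [hx.2]) hε0.le)
    have hkm : (⌊(1 - x) / ε⌋ : ℝ) ≤ ⌊1 / ε⌋ := by
      exact_mod_cast floor_div_le_floor_one_div hε0 (by linarith [hx.1])
    constructor
    · linarith [(div_le_one (by linarith)).2 hkm]
    · linarith [div_nonneg hk0 (by linarith : (0 : ℝ) ≤ ⌊1 / ε⌋)]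

end

section

variable {ι : Type*} {ε c : ℝ} {s : Finset ι} {x : ι → ℝ}

lemma card_filter_le_le_floor_div (hε : 0 < ε) (hx0 : ∀ j ∈ s, 0 ≤ x j)
    (hsum : ∑ j ∈ s, x j ≤ c) : (#(s.filter (fun j => ε ≤ x j)) : ℤ) ≤ ⌊c / ε⌋ := by
  refine Int.le_floor.2 ((le_div_iff₀ hε).2 ?_)
  calc (#(s.filter (fun j => ε ≤ x j)) : ℝ) * ε
      = #(s.filter (fun j => ε ≤ x j)) • ε := (nsmul_eq_mul _ _).symm
    _ ≤ ∑ j ∈ s.filter (fun j => ε ≤ x j), x j :=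
      card_nsmul_le_sum _ _ _ fun j hj => (mem_filter.1 hj).2
    _ ≤ ∑ j ∈ s, x j := sum_le_sum_of_subset_of_nonneg (filter_subset _ _) fun j hj _ => hx0 j hj
    _ ≤ c := hsum

lemma sum_phiEps_le_of_le_half (hε : 0 < ε) (hx0 : ∀ j ∈ s, 0 ≤ x j)
    (hx : ∀ j ∈ s, x j ≤ 1 / 2) (hsum : ∑ j ∈ s, x j ≤ c) :
    ∑ j ∈ s, phiEps ε (x j) ≤ (⌊c / ε⌋ : ℝ) / (⌊1 / ε⌋ : ℝ) := by
  have hcount : (#(s.filter (fun j => ε ≤ x j)) : ℝ) ≤ ⌊c / ε⌋ := by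
    exact_mod_cast card_filter_le_le_floor_div hε hx0 hsum
  calc ∑ j ∈ s, phiEps ε (x j)
      = ∑ j ∈ s, if ε ≤ x j then 1 / (⌊1 / ε⌋ : ℝ) else 0 :=
        sum_congr rfl fun j hj => phiEps_of_le_half (hx j hj)
    _ = #(s.filter (fun j => ε ≤ x j)) / (⌊1 / ε⌋ : ℝ) := by
        rw [← sum_filter, sum_const, nsmul_eq_mul, mul_one_div]
    _ ≤ (⌊c / ε⌋ : ℝ) / (⌊1 / ε⌋ : ℝ) :=
        div_le_div_of_nonneg_right hcount (by exact_mod_cast Int.floor_nonneg.2 (by positivity))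

end

lemma add_le_sum_of_ne {ι : Type*} [Fintype ι] {x : ι → ℝ} (hx0 : ∀ j, 0 ≤ x j) {i j : ι}
    (hij : i ≠ j) : x i + x j ≤ ∑ k, x k := by
  classical
  rw [← sum_pair hij]
  exact sum_le_sum_of_subset_of_nonneg (subset_univ _) fun k _ _ => hx0 k

lemma sum_phiEps_le_one {ι : Type*} [Fintype ι] {ε : ℝ} (hε : 0 < ε) (hε1 : ε ≤ 1) {x : ι → ℝ}
    (hx : ∀ j, x j ∈ Set.Icc (0 : ℝ) 1) (hsum : ∑ j, x j ≤ 1) :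
    ∑ j, phiEps ε (x j) ≤ 1 := by
  classical
  have hx0 j : 0 ≤ x j := (hx j).1
  by_cases hbig : ∃ i, 1 / 2 < x i
  · obtain ⟨i, hi⟩ := hbig
    have hrest : ∀ j ∈ univ.erase i, x j ≤ 1 / 2 := fun j hj =>
      by linarith [add_le_sum_of_ne hx0 (ne_of_mem_erase hj).symm]
    have hrest_sum : ∑ j ∈ univ.erase i, x j ≤ 1 - x i := by
      linarith [add_sum_erase univ x (mem_univ i)]
    rw [← add_sum_erase _ _ (mem_univ i), phiEps_of_half_lt hi]
    linarith [sum_phiEps_le_of_le_half hε (fun j _ => hx0 j) hrest hrest_sum]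
  · simp only [not_exists, not_lt] at hbig
    calc ∑ j, phiEps ε (x j) ≤ (⌊1 / ε⌋ : ℝ) / (⌊1 / ε⌋ : ℝ) :=
          sum_phiEps_le_of_le_half hε (fun j _ => hx0 j) (fun j _ => hbig j) hsum
      _ = 1 := div_self (by linarith [one_le_floor_one_div hε hε1])

lemma dualFeasible_phiEps {ε : ℝ} (hε0 : 0 < ε) (hε1 : ε ≤ 1) : DualFeasible (phiEps ε) :=
  ⟨fun _ hx => phiEps_mem_Icc hε0 hε1 hx, fun _ _ hx hsum => sum_phiEps_le_one hε0 hε1 hx hsum⟩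

open Classical in
/-- For every `ε ∈ (0,1/2)`, the function `φ^(ε)` with
`φ^(ε)(x) = 1 - ⌊(1-x)/ε⌋ / ⌊1/ε⌋` for `x > 1/2`,
`φ^(ε)(x) = 1 / ⌊1/ε⌋` for `ε ≤ x ≤ 1/2`, and `φ^(ε)(x) = 0` for `x < ε`,
is a dual feasible function. -/
theorem phi_eps_dualFeasible (ε : ℝ) (hε : ε ∈ Set.Ioo (0 : ℝ) (1 / 2)) :
    DualFeasible (fun x : ℝ =>
      if 1 / 2 < x then 1 - (⌊(1 - x) / ε⌋ : ℝ) / (⌊1 / ε⌋ : ℝ)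
      else if ε ≤ x then 1 / (⌊1 / ε⌋ : ℝ)
      else 0) :=
  dualFeasible_phiEps hε.1 (by linarith [hε.2])
end

section
/- Let V be a finite set, w : V → [0,1]^d a size function, E_{+} = (E_{+,1},…,E_{+,d}) a d-tuple of edge sets on V, b ∈ V a box, and i ∈ {1,…,d} a coordinate. Let λ be a real number with λ ≥ ∑_{c∈S} w_i(c) for every set S ∈ F(V,w_i,E_{+,i}) with b ∈ S. Define w' by w'_i(b) = w_i(b) + (1 − λ), and w'_j(c) = w_j(c) for all (j,c) ≠ (i,b). Then for every j ∈ {1,…,d}, every S ∈ F(V,w_j,E_{+,j}) satisfies ∑_{c∈S} w'_j(c) ≤ 1, i.e., F(V,w_j,E_{+,j}) ⊆ F(V,w'_j) for all j. -/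
/-- Stretching a single box along one coordinate as much as possible preserves the
generalized conservative-scale property: if `λ` bounds `∑_{c ∈ S} wᵢ(c)` for every
set `S ∈ F(V,wᵢ,E₊ᵢ)` containing `b`, and `w'` agrees with `w` except that
`w'ᵢ(b) = wᵢ(b) + (1 - λ)`, then `F(V,wⱼ,E₊ⱼ) ⊆ F(V,w'ⱼ)` for every coordinate `j`. -/
theorem stretch_conservativeScale {V : Type*} [Fintype V] [DecidableEq V] {d : ℕ}
    (w : V → Fin d → ℝ) (hw : ∀ c j, w c j ∈ Set.Icc (0 : ℝ) 1)
    (Eplus : Fin d → SimpleGraph V) (b : V) (i : Fin d) (lam : ℝ)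
    (hlam : ∀ S : Finset V, b ∈ S →
      ∑ c ∈ S, w c i ≤ 1 →
      (∀ u ∈ S, ∀ v ∈ S, ¬ (Eplus i).Adj u v) →
      ∑ c ∈ S, w c i ≤ lam)
    (w' : V → Fin d → ℝ)
    (hw'b : w' b i = w b i + (1 - lam))
    (hw'rest : ∀ (c : V) (j : Fin d), (j, c) ≠ (i, b) → w' c j = w c j) :
    ∀ (j : Fin d) (S : Finset V),
      ∑ c ∈ S, w c j ≤ 1 →
      (∀ u ∈ S, ∀ v ∈ S, ¬ (Eplus j).Adj u v) →
      ∑ c ∈ S, w' c j ≤ 1 := by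
  intro j S hS hind
  by_cases hji : j = i
  · subst hji
    by_cases hb : b ∈ S
    · have hsum : ∑ c ∈ S, w' c j = (∑ c ∈ S, w c j) + (1 - lam) := by
        rw [← Finset.sum_erase_add _ _ hb, ← Finset.sum_erase_add _ (w · j) hb, hw'b]
        have : ∑ c ∈ S.erase b, w' c j = ∑ c ∈ S.erase b, w c j := by
          apply Finset.sum_congr rfl
          intro c hc
          exact hw'rest c j (by simp [Prod.ext_iff, Finset.ne_of_mem_erase hc])
        rw [this]; ring
      rw [hsum]
      have := hlam S hb hS hind
      linarith
    · have : ∑ c ∈ S, w' c j = ∑ c ∈ S, w c j := by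
        apply Finset.sum_congr rfl
        intro c hc
        exact hw'rest c j (by rintro ⟨rfl, rfl⟩ <;> simp_all)
      linarith [this]
  · have : ∑ c ∈ S, w' c j = ∑ c ∈ S, w c j := by
      apply Finset.sum_congr rfl
      intro c hc
      exact hw'rest c j (by simp [Prod.ext_iff, hji])
    linarith [this]
end

section
/- If (E_1,…,E_d) is a packing class for (V,w), and w' : V → [0,1]^d is a size function such that for every i ∈ {1,…,d}, every S ⊆ V with ∑_{b∈S} w_i(b) ≤ 1 satisfies ∑_{b∈S} w'_i(b) ≤ 1, then for every i ∈ {1,…,d} and every S ⊆ V, the induced subgraph G_i[S] of the i-th component graph contains a clique of cardinality ⌈∑_{b∈S} w'_i(b)⌉. -/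
/-!
Interval graphs are perfect: ordered by left endpoints, the vertices form a perfect elimination
order, so greedy colouring covers `S` by `ω(Gᵢ[S])` stable sets. Each of them is `wᵢ`-feasible by
(P2), hence `w'ᵢ`-feasible, so `∑_{b ∈ S} w'ᵢ(b) ≤ ω(Gᵢ[S])`, and a maximum clique of `Gᵢ[S]`
contains a clique of size `⌈∑_{b ∈ S} w'ᵢ(b)⌉`.
-/

/-- `G` is an interval graph: there are open intervals `(a v, b v)` such that two
distinct vertices are adjacent iff their intervals intersect. -/
def IsIntervalGraph {V : Type*} (G : SimpleGraph V) : Prop :=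
  ∃ a b : V → ℝ, (∀ v, a v < b v) ∧
    ∀ u v : V, u ≠ v →
      (G.Adj u v ↔ (Set.Ioo (a u) (b u) ∩ Set.Ioo (a v) (b v)).Nonempty)

/-- A *packing class* for `(V, w)`: a `d`-tuple of graphs `G i` on `V` such that
(P1) each `G i` is an interval graph, (P2) every stable set of `G i` is `i`-feasible,
and (P3) no two distinct vertices are adjacent in all `d` graphs. -/
def IsPackingClass {V : Type*} [Fintype V] {d : ℕ} (w : V → Fin d → ℝ)
    (G : Fin d → SimpleGraph V) : Prop :=
  (∀ i, IsIntervalGraph (G i)) ∧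
  (∀ (i : Fin d) (S : Finset V),
    (∀ u ∈ S, ∀ v ∈ S, u ≠ v → ¬ (G i).Adj u v) → ∑ b ∈ S, w b i ≤ 1) ∧
  (∀ u v : V, u ≠ v → ∃ i, ¬ (G i).Adj u v)

open Finset

namespace SimpleGraph

variable {V : Type*} (G : SimpleGraph V)

/-- Deleting the vertices in decreasing order of `key`, each one is simplicial in the graph that
remains: a perfect elimination ordering. -/
def IsPerfectEliminationKey (key : V → ℝ) : Prop :=
  ∀ v x y, key x ≤ key v → key y ≤ key v → G.Adj x v → G.Adj y v → x ≠ y → G.Adj x y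

variable {G}

/-- Left endpoints give a perfect elimination key: if the intervals of `x` and `y` meet the
interval of `v` and start no later than it, both contain a point just to the right of `a v`. -/
lemma isPerfectEliminationKey_of_intervals (a b : V → ℝ)
    (hadj : ∀ u v : V, u ≠ v →
      (G.Adj u v ↔ (Set.Ioo (a u) (b u) ∩ Set.Ioo (a v) (b v)).Nonempty)) :
    G.IsPerfectEliminationKey a := by
  have right_of_start : ∀ x v, G.Adj x v → a v < b x := fun x v hxv => by
    obtain ⟨t, ⟨-, htx⟩, hvt, -⟩ := (hadj x v hxv.ne).1 hxv
    exact hvt.trans htx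
  intro v x y hxv hyv hx hy hxy
  obtain ⟨t, hvt, ht⟩ := exists_between (lt_min (right_of_start x v hx) (right_of_start y v hy))
  exact (hadj x y hxy).2
    ⟨t, ⟨hxv.trans_lt hvt, ht.trans_le (min_le_left _ _)⟩,
      ⟨hyv.trans_lt hvt, ht.trans_le (min_le_right _ _)⟩⟩

lemma _root_.IsIntervalGraph.exists_isPerfectEliminationKey (hG : IsIntervalGraph G) :
    ∃ key, G.IsPerfectEliminationKey key := by
  obtain ⟨a, b, -, hadj⟩ := hG
  exact ⟨a, isPerfectEliminationKey_of_intervals a b hadj⟩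

variable {key : V → ℝ}

lemma IsPerfectEliminationKey.isClique_insert (h : G.IsPerfectEliminationKey key) {v : V}
    {N : Set V} (hN : ∀ x ∈ N, key x ≤ key v ∧ G.Adj x v) : G.IsClique (insert v N) :=
  IsClique.insert
    (fun x hx y hy hxy => h v x y (hN x hx).1 (hN y hy).1 (hN x hx).2 (hN y hy).2 hxy)
    fun x hx _ => (hN x hx).2.symm

/-- Colour greedily in increasing order of `key`: the already coloured neighbours of `v` form a
clique together with `v`, so they use fewer than `n` colours. -/
lemma IsPerfectEliminationKey.exists_coloring (h : G.IsPerfectEliminationKey key) (n : ℕ)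
    (S : Finset V) (hcl : ∀ T ⊆ S, G.IsClique (T : Set V) → #T ≤ n) :
    ∃ c : V → ℕ, (∀ v ∈ S, c v < n) ∧ ∀ u ∈ S, ∀ v ∈ S, G.Adj u v → c u ≠ c v := by
  classical
  induction S using Finset.induction_on_max_value key with
  | empty => exact ⟨fun _ => 0, by simp, by simp⟩
  | insert v S hvS hmax ih =>
    obtain ⟨c, hc_lt, hc⟩ := ih fun T hT => hcl T (hT.trans (subset_insert v S))
    set N := S.filter (G.Adj · v)
    have hN : #N < n := by
      have hclique := h.isClique_insert (N := (N : Set V))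
        fun x hx => ⟨hmax x (mem_filter.1 hx).1, (mem_filter.1 hx).2⟩
      have := hcl (insert v N) (insert_subset_insert v (filter_subset _ S))
        (by simpa using hclique)
      rwa [card_insert_of_notMem fun hv => hvS (mem_filter.1 hv).1] at this
    obtain ⟨j, hjn, hj⟩ := exists_mem_notMem_of_card_lt_card
      (s := N.image c) (t := range n) (card_image_le.trans_lt (by simpa using hN))
    have hj' : ∀ x ∈ S, G.Adj x v → c x ≠ j := fun x hx hxv hcx =>
      hj (mem_image.2 ⟨x, mem_filter.2 ⟨hx, hxv⟩, hcx⟩)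
    have hne : ∀ x ∈ S, x ≠ v := fun x hx hxv => hvS (hxv ▸ hx)
    refine ⟨Function.update c v j, ?_, ?_⟩
    · intro x hx
      obtain rfl | hx := mem_insert.1 hx
      · simpa using hjn
      · rw [Function.update_of_ne (hne x hx)]
        exact hc_lt x hx
    · intro x hx y hy hxy
      obtain hxv | hx := mem_insert.1 hx <;> obtain hyv | hy := mem_insert.1 hy
      · exact absurd (hxv.trans hyv.symm) hxy.ne
      · rw [hxv, Function.update_self, Function.update_of_ne (hne y hy)]
        exact (hj' y hy (hxv ▸ hxy).symm).symm
      · rw [hyv, Function.update_self, Function.update_of_ne (hne x hx)]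
        exact hj' x hx (hyv ▸ hxy)
      · rw [Function.update_of_ne (hne x hx), Function.update_of_ne (hne y hy)]
        exact hc x hx y hy hxy

lemma sum_le_of_coloring {f : V → ℝ} {n : ℕ} {S : Finset V} {c : V → ℕ}
    (hc_lt : ∀ v ∈ S, c v < n) (hc : ∀ u ∈ S, ∀ v ∈ S, G.Adj u v → c u ≠ c v)
    (hf : ∀ T ⊆ S, G.IsIndepSet (T : Set V) → ∑ x ∈ T, f x ≤ 1) :
    ∑ x ∈ S, f x ≤ n := by
  classical
  calc ∑ x ∈ S, f x = ∑ j ∈ range n, ∑ x ∈ S with c x = j, f x :=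
        (sum_fiberwise_of_maps_to (fun x hx => mem_range.2 (hc_lt x hx)) f).symm
    _ ≤ ∑ _j ∈ range n, (1 : ℝ) := by
        refine sum_le_sum fun j _ => hf _ (filter_subset _ S) ?_
        intro x hx y hy _ hxy
        rw [mem_coe, mem_filter] at hx hy
        exact hc x hx.1 y hy.1 hxy (hx.2.trans hy.2.symm)
    _ = n := by simp

lemma exists_isClique_forall_card_le (G : SimpleGraph V) (S : Finset V) :
    ∃ T ⊆ S, G.IsClique (T : Set V) ∧ ∀ T' ⊆ S, G.IsClique (T' : Set V) → #T' ≤ #T := by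
  classical
  obtain ⟨T, hT, hmax⟩ :=
    (S.powerset.filter fun T : Finset V => G.IsClique (T : Set V)).exists_max_image card
      ⟨∅, by simp⟩
  simp only [mem_filter, mem_powerset] at hT hmax
  exact ⟨T, hT.1, hT.2, fun T' hT' hT'c => hmax T' ⟨hT', hT'c⟩⟩

lemma IsPerfectEliminationKey.exists_isClique_card_eq_ceil (h : G.IsPerfectEliminationKey key)
    {f : V → ℝ} (hf_nonneg : ∀ x, 0 ≤ f x) (S : Finset V)
    (hf : ∀ T ⊆ S, G.IsIndepSet (T : Set V) → ∑ x ∈ T, f x ≤ 1) :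
    ∃ T ⊆ S, G.IsClique (T : Set V) ∧ (#T : ℤ) = ⌈∑ x ∈ S, f x⌉ := by
  obtain ⟨K, hKS, hK, hmax⟩ := exists_isClique_forall_card_le G S
  obtain ⟨c, hc_lt, hc⟩ := h.exists_coloring #K S hmax
  have hceil : ⌈∑ x ∈ S, f x⌉.toNat ≤ #K := by
    simpa [Int.ceil_le] using sum_le_of_coloring hc_lt hc hf
  obtain ⟨T, hTK, hT⟩ := exists_subset_card_eq hceil
  refine ⟨T, hTK.trans hKS, hK.subset (by simpa using hTK), ?_⟩
  rw [hT, Int.toNat_of_nonneg (Int.ceil_nonneg (sum_nonneg fun x _ => hf_nonneg x))]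

end SimpleGraph

theorem packingClass_clique_bound_general {V : Type*} [Fintype V] {d : ℕ}
    (w w' : V → Fin d → ℝ)
    (hw' : ∀ b i, w' b i ∈ Set.Icc (0 : ℝ) 1)
    (hsub : ∀ (i : Fin d) (S : Finset V),
      ∑ b ∈ S, w b i ≤ 1 → ∑ b ∈ S, w' b i ≤ 1)
    (G : Fin d → SimpleGraph V) (hG : IsPackingClass w G) :
    ∀ (i : Fin d) (S : Finset V), ∃ T : Finset V, T ⊆ S ∧
      (G i).IsClique (T : Set V) ∧ (T.card : ℤ) = ⌈∑ b ∈ S, w' b i⌉ := by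
  intro i S
  obtain ⟨key, hkey⟩ := (hG.1 i).exists_isPerfectEliminationKey
  exact hkey.exists_isClique_card_eq_ceil (fun b => (hw' b i).1) S
    fun T _ hT => hsub i T (hG.2.1 i T fun u hu v hv => hT hu hv)

/-- If `(G₁,…,G_d)` is a packing class for `(V,w)` and `w'` is a conservative scale for
`(V,w)`, then for every coordinate `i` and every set `S ⊆ V`, the induced subgraph
`Gᵢ[S]` contains a clique of cardinality `⌈∑_{b ∈ S} w'ᵢ(b)⌉`. -/
theorem packingClass_clique_bound {V : Type*} [Fintype V] {d : ℕ}
    (w w' : V → Fin d → ℝ)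
    (hw : ∀ b i, w b i ∈ Set.Icc (0 : ℝ) 1) (hw' : ∀ b i, w' b i ∈ Set.Icc (0 : ℝ) 1)
    (hsub : ∀ (i : Fin d) (S : Finset V),
      ∑ b ∈ S, w b i ≤ 1 → ∑ b ∈ S, w' b i ≤ 1)
    (G : Fin d → SimpleGraph V) (hG : IsPackingClass w G) :
    ∀ (i : Fin d) (S : Finset V), ∃ T : Finset V, T ⊆ S ∧
      (G i).IsClique (T : Set V) ∧ (T.card : ℤ) = ⌈∑ b ∈ S, w' b i⌉ :=
  packingClass_clique_bound_general w w' hw' hsub G hG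
end

section
/- Let V be a finite set of boxes with size function w : V → [0,1]^d that admits an orthogonal packing into the unit cube [0,1]^d, and let u_1, …, u_d be dual feasible functions. Then ∑_{b∈V} ∏_{i=1}^d u_i(w_i(b)) ≤ 1. -/
/-- `p` is an orthogonal packing of the boxes `(V, w)` into the unit cube `[0,1]^d`:
each box lies inside the cube and distinct boxes have disjoint interiors
(they are separated along some coordinate). -/
def IsOrthogonalPacking {V : Type*} {d : ℕ} (w p : V → Fin d → ℝ) : Prop :=
  (∀ b i, 0 ≤ p b i ∧ p b i + w b i ≤ 1) ∧
  ∀ b c : V, b ≠ c → ∃ i, p b i + w b i ≤ p c i ∨ p c i + w c i ≤ p b i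

/-!
Applying a dual feasible function `u` to the `k`-th widths keeps a family of boxes packable.
Boxes whose projections orthogonal to `k` overlap must have disjoint `k`-intervals, so they
are ordered along `k`; placing each box at the largest `u`-weight of a chain of predecessors
works, because the widths along such a chain together with the box's own width sum to at most
`1`, hence so do their images under `u`. Transforming every coordinate in turn yields a packing
of the boxes with widths `uᵢ(wᵢ(b))`, whose volumes sum to at most `1`.
-/

theorem DualFeasible.map_zero {u : ℝ → ℝ} (hu : DualFeasible u) : u 0 = 0 := by
  refine le_antisymm ?_ (hu.1 0 ⟨le_rfl, zero_le_one⟩).1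
  by_contra! hpos
  obtain ⟨n, hn⟩ := exists_nat_gt (1 / u 0)
  have hsum := hu.2 n (fun _ => 0) (fun _ => ⟨le_rfl, zero_le_one⟩) (by simp)
  simp only [Finset.sum_const, Finset.card_univ, Fintype.card_fin, nsmul_eq_mul] at hsum
  rw [div_lt_iff₀ hpos] at hn
  linarith

theorem DualFeasible.list_sum_map_le_one {u : ℝ → ℝ} (hu : DualFeasible u) {l : List ℝ}
    (hl : ∀ x ∈ l, x ∈ Set.Icc (0 : ℝ) 1) (hsum : l.sum ≤ 1) : (l.map u).sum ≤ 1 := by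
  have := hu.2 l.length l.get (fun j => hl _ (l.get_mem j))
    (by rwa [← List.sum_ofFn, List.ofFn_get])
  rwa [← List.sum_ofFn, ← Function.comp_def, ← List.map_ofFn, List.ofFn_get] at this

theorem List.IsChain.sum_map_le {ι : Type*} {r : ι → ι → Prop} {p w : ι → ℝ}
    (hp : ∀ c, 0 ≤ p c) (hr : ∀ b c, r b c → p b + w b ≤ p c) {c : ι} {l : List ι}
    (hl : (l ++ [c]).IsChain r) : (l.map w).sum ≤ p c := by
  induction l using List.reverseRecOn generalizing c with
  | nil => simpa using hp c
  | append_singleton l b ih =>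
    obtain ⟨hlb, -, hbc⟩ := List.isChain_append.1 hl
    have := hr b c (hbc b (by simp) c rfl)
    simp only [List.map_append, List.sum_append, List.map_singleton, List.sum_singleton]
    linarith [ih hlb]

open Classical in
theorem WellFounded.exists_chain_potential {ι : Type*} [Fintype ι] {r : ι → ι → Prop}
    (hr : WellFounded r) (f : ι → ℝ) :
    ∃ q : ι → ℝ, (∀ c, 0 ≤ q c) ∧ (∀ b c, r b c → q b + f b ≤ q c) ∧
      ∀ c, ∃ l : List ι, (l ++ [c]).IsChain r ∧ q c ≤ (l.map f).sum := by
  obtain ⟨q, hq⟩ : ∃ q : ι → ℝ,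
      ∀ c, q c = Finset.univ.fold max 0 fun b => if r b c then q b + f b else 0 :=
    ⟨hr.fix fun c IH => Finset.univ.fold max 0 fun b => if h : r b c then IH b h + f b else 0,
      fun c => by rw [hr.fix_eq]; simp only [dite_eq_ite]⟩
  have hq_nonneg : ∀ c, 0 ≤ q c := fun c => by
    rw [hq]; exact Finset.le_fold_max _ |>.2 (Or.inl le_rfl)
  have hq_rel : ∀ b c, r b c → q b + f b ≤ q c := fun b c h => by
    rw [hq c]; exact Finset.le_fold_max _ |>.2 (Or.inr ⟨b, Finset.mem_univ b, by simp [h]⟩)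
  have hq_attained : ∀ c, q c ≤ 0 ∨ ∃ b, r b c ∧ q c ≤ q b + f b := fun c => by
    by_contra! h
    have : q c < q c := by
      conv_lhs => rw [hq]
      refine (Finset.fold_max_lt _).2 ⟨h.1, fun b _ => ?_⟩
      split_ifs with hbc
      exacts [h.2 b hbc, h.1]
    exact lt_irrefl _ this
  refine ⟨q, hq_nonneg, hq_rel, fun c => ?_⟩
  induction c using hr.induction with | _ c ih => ?_
  rcases hq_attained c with h0 | ⟨b, hbc, hle⟩
  · exact ⟨[], List.isChain_singleton c, by simpa using h0⟩
  · obtain ⟨l, hl, hqb⟩ := ih b hbc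
    refine ⟨l ++ [b], hl.append (List.isChain_singleton c) ?_, ?_⟩
    · simpa using hbc
    · simp only [List.map_append, List.sum_append, List.map_singleton, List.sum_singleton]
      linarith

theorem DualFeasible.exists_repacking_intervals {ι : Type*} [Fintype ι] {u : ℝ → ℝ}
    (hu : DualFeasible u) {C : ι → ι → Prop} (hC : ∀ b c, C b c → C c b) {p w : ι → ℝ}
    (hw : ∀ b, 0 ≤ w b) (hp : ∀ b, 0 ≤ p b ∧ p b + w b ≤ 1)
    (hsep : ∀ b c, C b c → p b + w b ≤ p c ∨ p c + w c ≤ p b) :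
    ∃ q : ι → ℝ, (∀ b, 0 ≤ q b ∧ q b + u (w b) ≤ 1) ∧
      ∀ b c, C b c → q b + u (w b) ≤ q c ∨ q c + u (w c) ≤ q b := by
  let r b c := C b c ∧ p b + w b ≤ p c ∧ 0 < w b + w c
  -- `r` strictly increases midpoints; pairs of points are left out, as `u 0 = 0` keeps them apart
  have hr : WellFounded r :=
    Subrelation.wf (r := InvImage (· < ·) fun b => 2 * p b + w b)
      (fun ⟨_, hle, hpos⟩ => by simp only [InvImage]; linarith)
      (Finite.wellFounded_of_trans_of_irrefl _)
  obtain ⟨q, hq_nonneg, hq_rel, hq_chain⟩ := hr.exists_chain_potential (fun b => u (w b))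
  refine ⟨q, fun b => ⟨hq_nonneg b, ?_⟩, fun b c hbc => ?_⟩
  · obtain ⟨l, hl, hql⟩ := hq_chain b
    have hwl : (l.map w).sum ≤ p b := hl.sum_map_le (fun c => (hp c).1) fun _ _ h => h.2.1
    have hw_le : ∀ c, w c ≤ 1 := fun c => by linarith [hp c]
    have := hu.list_sum_map_le_one (l := l.map w ++ [w b])
      (by simp only [List.mem_append, List.mem_map, List.mem_singleton]
          rintro x (⟨c, -, rfl⟩ | rfl) <;> exact ⟨hw _, hw_le _⟩)
      (by simp only [List.sum_append, List.sum_singleton]; linarith [hp b])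
    simp only [List.map_append, List.map_map, Function.comp_def, List.sum_append,
      List.map_singleton, List.sum_singleton] at this
    linarith
  · by_cases hpos : 0 < w b + w c
    · rcases hsep b c hbc with h | h
      · exact Or.inl (hq_rel b c ⟨hbc, h, hpos⟩)
      · exact Or.inr (hq_rel c b ⟨hC b c hbc, h, by linarith⟩)
    · obtain ⟨hb, hc⟩ : w b = 0 ∧ w c = 0 :=
        ⟨by linarith [hw b, hw c], by linarith [hw b, hw c]⟩
      simp only [hb, hc, hu.map_zero, add_zero]
      exact le_total _ _

theorem IsOrthogonalPacking.exists_update_dualFeasible {V : Type*} [Fintype V] {d : ℕ}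
    {w p : V → Fin d → ℝ} (hp : IsOrthogonalPacking w p) {k : Fin d} (hw : ∀ b, 0 ≤ w b k)
    {u : ℝ → ℝ} (hu : DualFeasible u) :
    ∃ p', IsOrthogonalPacking (fun b => Function.update (w b) k (u (w b k))) p' := by
  let separated (b c : V) (i : Fin d) := p b i + w b i ≤ p c i ∨ p c i + w c i ≤ p b i
  let conflict (b c : V) := b ≠ c ∧ ∀ i ≠ k, ¬separated b c i
  have hsep b c (h : conflict b c) : separated b c k := by
    obtain ⟨i, hi⟩ := hp.2 b c h.1
    obtain rfl | hik := eq_or_ne i k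
    exacts [hi, absurd hi (h.2 i hik)]
  obtain ⟨q, hq_box, hq_sep⟩ := hu.exists_repacking_intervals (C := conflict)
    (fun b c h => ⟨h.1.symm, fun i hi hs => h.2 i hi hs.symm⟩) hw (fun b => hp.1 b k) hsep
  refine ⟨fun b => Function.update (p b) k (q b), fun b i => ?_, fun b c hne => ?_⟩
  · obtain rfl | hik := eq_or_ne i k
    · simpa using hq_box b
    · simpa [hik] using hp.1 b i
  · by_cases hC : ∃ i ≠ k, separated b c i
    · obtain ⟨i, hik, hi⟩ := hC
      exact ⟨i, by simpa [hik] using hi⟩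
    · exact ⟨k, by simpa using hq_sep b c ⟨hne, fun i hik hi => hC ⟨i, hik, hi⟩⟩⟩

open MeasureTheory Function in
theorem IsOrthogonalPacking.sum_prod_le_one {V : Type*} [Fintype V] {d : ℕ}
    {w p : V → Fin d → ℝ} (hp : IsOrthogonalPacking w p) (hw : ∀ b i, 0 ≤ w b i) :
    ∑ b, ∏ i, w b i ≤ 1 := by
  let box b : Set (Fin d → ℝ) := Set.univ.pi fun i => Set.Ioo (p b i) (p b i + w b i)
  have hvol b : volume (box b) = ∏ i, ENNReal.ofReal (w b i) := by
    simp only [box, Real.volume_pi_Ioo, add_sub_cancel_left]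
  have hdisj : Pairwise (Disjoint on box) := fun b c hbc => by
    obtain ⟨i, hi⟩ := hp.2 b c hbc
    refine Set.disjoint_left.2 fun x hxb hxc => ?_
    have hb := hxb i (Set.mem_univ i)
    have hc := hxc i (Set.mem_univ i)
    simp only [Set.mem_Ioo] at hb hc
    rcases hi with h | h <;> linarith
  have hsub : (⋃ b, box b) ⊆ Set.Icc 0 1 := Set.iUnion_subset fun b x hx =>
    ⟨fun i => (hp.1 b i).1.trans (hx i trivial).1.le,
      fun i => (hx i trivial).2.le.trans (hp.1 b i).2⟩
  calc ∑ b, ∏ i, w b i = ∑ b, volume.real (box b) := by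
        simp [measureReal_def, hvol, ENNReal.toReal_prod, ENNReal.toReal_ofReal (hw _ _)]
    _ = volume.real (⋃ b, box b) :=
        (measureReal_iUnion_fintype hdisj
          (fun b => MeasurableSet.univ_pi fun i => measurableSet_Ioo)
          fun b => by rw [hvol]; exact ENNReal.prod_ne_top fun _ _ => ENNReal.ofReal_ne_top).symm
    _ ≤ volume.real (Set.Icc 0 1 : Set (Fin d → ℝ)) :=
        measureReal_mono hsub isCompact_Icc.measure_lt_top.ne
    _ = 1 := by simp [measureReal_def]

/-- If the boxes `(V,w)` admit an orthogonal packing into the unit cube and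
`u₁, …, u_d` are dual feasible functions, then the transformed total volume
satisfies `∑_{b ∈ V} ∏ᵢ uᵢ(wᵢ(b)) ≤ 1`. -/
theorem transformedVolume_le_one {V : Type*} [Fintype V] {d : ℕ}
    (w : V → Fin d → ℝ) (hw : ∀ b i, w b i ∈ Set.Icc (0 : ℝ) 1)
    (hpack : ∃ p : V → Fin d → ℝ, IsOrthogonalPacking w p)
    (u : Fin d → ℝ → ℝ) (hu : ∀ i, DualFeasible (u i)) :
    ∑ b, ∏ i, u i (w b i) ≤ 1 := by
  classical
  let transformed (s : Finset (Fin d)) b := s.piecewise (fun i => u i (w b i)) (w b)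
  have hnonneg s b i : 0 ≤ transformed s b i := by
    by_cases hi : i ∈ s
    · simpa [transformed, hi] using ((hu i).1 _ (hw b i)).1
    · simpa [transformed, hi] using (hw b i).1
  have hpacked s : ∃ p, IsOrthogonalPacking (transformed s) p := by
    induction s using Finset.induction_on with
    | empty => simpa [transformed] using hpack
    | insert k s hk ih =>
      obtain ⟨p, hp⟩ := ih
      have := hp.exists_update_dualFeasible (fun b => hnonneg s b k) (hu k)
      simpa [transformed, Finset.piecewise_insert, hk] using this
  obtain ⟨p, hp⟩ := hpacked Finset.univ
  simpa [transformed] using hp.sum_prod_le_one (hnonneg Finset.univ)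
end

section
/- Let V be a finite set of boxes with size function w : V → [0,1]^{d−1} × [0,∞), and suppose (V,w) admits an orthogonal packing into the strip [0,1]^{d−1} × [0,h] for some h > 0 (i.e., positions p : V → ℝ^d with 0 ≤ p_i(b), p_i(b) + w_i(b) ≤ 1 for i = 1,…,d−1, 0 ≤ p_d(b), p_d(b) + w_d(b) ≤ h, and pairwise interior-disjointness). Then for all dual feasible functions u_1, …, u_{d−1}: ∑_{b∈V} (∏_{i=1}^{d−1} u_i(w_i(b)))·w_d(b) ≤ h. In particular, this transformed total volume is a lower bound on the optimal strip height for the strip packing instance (V,w). -/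
open Finset MeasureTheory

namespace DualFeasible

variable {u : ℝ → ℝ}

theorem map_zero_s12 (hu : DualFeasible u) : u 0 = 0 := by
  have h0 : (0 : ℝ) ∈ Set.Icc (0 : ℝ) 1 := by simp
  refine le_antisymm ?_ (hu.1 0 h0).1
  refine le_of_forall_pos_le_add fun ε hε => ?_
  obtain ⟨n, hn⟩ := exists_nat_gt ε⁻¹
  have hsum := hu.2 n (fun _ => 0) (fun _ => h0) (by simp)
  simp only [sum_const, card_univ, Fintype.card_fin, nsmul_eq_mul] at hsum
  have : ε⁻¹ * u 0 ≤ 1 := le_trans (mul_le_mul_of_nonneg_right hn.le (hu.1 0 h0).1) hsum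
  nlinarith [inv_mul_cancel₀ hε.ne', (hu.1 0 h0).1]

theorem sum_le_one (hu : DualFeasible u) {ι : Type*} {C : Finset ι} {x : ι → ℝ}
    (hx : ∀ j ∈ C, x j ∈ Set.Icc 0 1) (hsum : ∑ j ∈ C, x j ≤ 1) : ∑ j ∈ C, u (x j) ≤ 1 := by
  let e := C.equivFin.symm
  rw [← sum_coe_sort, ← e.sum_comp] at hsum ⊢
  exact hu.2 _ _ (fun k => hx _ (e k).2) hsum

end DualFeasible

theorem volume_pi_Ico_ne_top {ι : Type*} [Fintype ι] (a b : ι → ℝ) :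
    volume (Set.univ.pi fun i => Set.Ico (a i) (b i)) ≠ ⊤ := by
  rw [Real.volume_pi_Ico]
  exact ENNReal.prod_ne_top fun i _ => ENNReal.ofReal_ne_top

theorem sum_prod_le_prod_of_pairwise_separated {ι V : Type*} [Fintype ι] {S : Finset V}
    {p w : V → ι → ℝ} {L : ι → ℝ} (hw : ∀ b ∈ S, ∀ i, 0 ≤ w b i)
    (hp0 : ∀ b ∈ S, ∀ i, 0 ≤ p b i) (hpL : ∀ b ∈ S, ∀ i, p b i + w b i ≤ L i) (hL : ∀ i, 0 ≤ L i)
    (hsep : (S : Set V).Pairwise fun b c => ∃ i, p b i + w b i ≤ p c i ∨ p c i + w c i ≤ p b i) :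
    ∑ b ∈ S, ∏ i, w b i ≤ ∏ i, L i := by
  let box : V → Set (ι → ℝ) := fun b => Set.univ.pi fun i => Set.Ico (p b i) (p b i + w b i)
  have hbox : ∀ b ∈ S, volume.real (box b) = ∏ i, w b i := fun b hb => by
    rw [measureReal_def, Real.volume_pi_Ico_toReal fun i => le_add_of_nonneg_right (hw b hb i)]
    simp_rw [add_sub_cancel_left]
  have hdisj : (S : Set V).PairwiseDisjoint box := by
    refine hsep.mono' fun b c ⟨i, hi⟩ => Set.disjoint_left.2 fun y hb hc => ?_
    have hbi := hb i (Set.mem_univ i)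
    have hci := hc i (Set.mem_univ i)
    rcases hi with hi | hi
    · exact absurd (hbi.2.trans_le hi) (not_lt.2 hci.1)
    · exact absurd (hci.2.trans_le hi) (not_lt.2 hbi.1)
  have hsub : (⋃ b ∈ S, box b) ⊆ Set.univ.pi fun i => Set.Ico 0 (L i) := by
    refine Set.iUnion₂_subset fun b hb y hy i _ => ?_
    have := hy i (Set.mem_univ i)
    exact ⟨(hp0 b hb i).trans this.1, this.2.trans_le (hpL b hb i)⟩
  calc ∑ b ∈ S, ∏ i, w b i = ∑ b ∈ S, volume.real (box b) := (sum_congr rfl hbox).symm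
    _ = volume.real (⋃ b ∈ S, box b) :=
      (measureReal_biUnion_finset hdisj (fun b _ => .univ_pi fun i => measurableSet_Ico)
        fun b _ => volume_pi_Ico_ne_top _ _).symm
    _ ≤ volume.real (Set.univ.pi fun i => Set.Ico 0 (L i)) :=
      measureReal_mono hsub (volume_pi_Ico_ne_top _ _)
    _ = ∏ i, L i := by
      rw [measureReal_def, Real.volume_pi_Ico_toReal fun i => hL i]
      simp_rw [sub_zero]

section Chain

variable {V : Type*} {p x : V → ℝ} {t : ℝ} {C : Finset V}

variable (p x) in
def IsChainBefore (t : ℝ) (C : Finset V) : Prop :=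
  (∀ c ∈ C, p c + x c ≤ t) ∧
    (C : Set V).Pairwise fun a c => p a + x a ≤ p c ∨ p c + x c ≤ p a

theorem IsChainBefore.mono {t' : ℝ} (h : IsChainBefore p x t C) (ht : t ≤ t') :
    IsChainBefore p x t' C :=
  ⟨fun c hc => (h.1 c hc).trans ht, h.2⟩

theorem IsChainBefore.extend [DecidableEq V] {b : V} (h : IsChainBefore p x (p b) C)
    (hb : 0 ≤ x b) : IsChainBefore p x (p b + x b) (insert b C) := by
  refine ⟨forall_mem_insert _ _ _ |>.2 ⟨le_rfl, fun c hc => ?_⟩, ?_⟩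
  · exact (h.1 c hc).trans (le_add_of_nonneg_right hb)
  · rw [coe_insert]
    exact h.2.insert fun c hc _ => ⟨.inr (h.1 c hc), .inl (h.1 c hc)⟩

theorem IsChainBefore.sum_insert [DecidableEq V] {u : ℝ → ℝ} (hu : DualFeasible u) {b : V}
    (h : IsChainBefore p x (p b) C) (hb : 0 ≤ x b) :
    ∑ c ∈ insert b C, u (x c) = ∑ c ∈ C, u (x c) + u (x b) := by
  by_cases hbC : b ∈ C
  · have : x b = 0 := le_antisymm (by linarith [h.1 b hbC]) hb
    rw [insert_eq_of_mem hbC, this, hu.map_zero_s12, add_zero]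
  · rw [Finset.sum_insert hbC, add_comm]

theorem IsChainBefore.sum_le (h : IsChainBefore p x t C) (hp : ∀ c ∈ C, 0 ≤ p c)
    (hx : ∀ c ∈ C, 0 ≤ x c) (ht : 0 ≤ t) : ∑ c ∈ C, x c ≤ t := by
  simpa using sum_prod_le_prod_of_pairwise_separated (ι := Unit) (p := fun c _ => p c)
    (w := fun c _ => x c) (L := fun _ => t) (fun c hc _ => hx c hc) (fun c hc _ => hp c hc)
    (fun c hc _ => h.1 c hc) (fun _ => ht) (h.2.imp fun _ _ h => ⟨(), h⟩)

theorem exists_isChainBefore_forall_sum_le [Fintype V] (f : V → ℝ) (t : ℝ) :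
    ∃ C, IsChainBefore p x t C ∧
      ∀ C', IsChainBefore p x t C' → ∑ c ∈ C', f c ≤ ∑ c ∈ C, f c := by
  classical
  obtain ⟨C, hC, hmax⟩ := (univ.filter (IsChainBefore p x t)).exists_max_image
    (fun C => ∑ c ∈ C, f c) ⟨∅, by simp [IsChainBefore]⟩
  exact ⟨C, (mem_filter.1 hC).2, fun C' hC' => hmax C' (mem_filter.2 ⟨mem_univ _, hC'⟩)⟩

end Chain

theorem DualFeasible.exists_repacking {V : Type*} [Fintype V] {u : ℝ → ℝ} (hu : DualFeasible u)
    {p x : V → ℝ} (hp : ∀ b, 0 ≤ p b) (hx : ∀ b, 0 ≤ x b) (h1 : ∀ b, p b + x b ≤ 1) :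
    ∃ q : V → ℝ, (∀ b, 0 ≤ q b) ∧ (∀ b, q b + u (x b) ≤ 1) ∧
      ∀ b c, p b + x b ≤ p c → q b + u (x b) ≤ q c := by
  classical
  choose C hC hmax using fun b =>
    exists_isChainBefore_forall_sum_le (p := p) (x := x) (fun c => u (x c)) (p b)
  replace hC : ∀ b, IsChainBefore p x (p b) (C b) := hC
  refine ⟨fun b => ∑ c ∈ C b, u (x c), fun b => ?_, fun b => ?_, fun b c hbc => ?_⟩
  · simpa using hmax b ∅ ⟨by simp, by simp⟩
  · have hchain := ((hC b).extend (hx b)).mono (h1 b)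
    rw [← (hC b).sum_insert hu (hx b)]
    exact hu.sum_le_one (fun c _ => ⟨hx c, by linarith [hp c, h1 c]⟩)
      (hchain.sum_le (fun c _ => hp c) (fun c _ => hx c) zero_le_one)
  · rw [← (hC b).sum_insert hu (hx b)]
    exact hmax c _ (((hC b).extend (hx b)).mono hbc)

/-- Strip packing bound: if the boxes `(V,w)` (with base sizes in `[0,1]` in the first
`d` coordinates and nonnegative height in the last coordinate) admit an orthogonal
packing into the strip `[0,1]^d × [0,h]`, then for all dual feasible functions
`u₁, …, u_d` the transformed total volume `∑_b (∏ᵢ uᵢ(wᵢ(b))) · w_{d+1}(b)` is at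
most `h`; in particular it is a lower bound on the optimal strip height. -/
theorem stripPacking_lowerBound {V : Type*} [Fintype V] {d : ℕ}
    (w : V → Fin (d + 1) → ℝ)
    (hw : ∀ b (i : Fin d), w b i.castSucc ∈ Set.Icc (0 : ℝ) 1)
    (hwd : ∀ b, 0 ≤ w b (Fin.last d))
    (h : ℝ) (hh : 0 < h)
    (p : V → Fin (d + 1) → ℝ)
    (hp0 : ∀ b i, 0 ≤ p b i)
    (hp1 : ∀ b (i : Fin d), p b i.castSucc + w b i.castSucc ≤ 1)
    (hph : ∀ b, p b (Fin.last d) + w b (Fin.last d) ≤ h)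
    (hdisj : ∀ b c : V, b ≠ c →
      ∃ i, p b i + w b i ≤ p c i ∨ p c i + w c i ≤ p b i)
    (u : Fin d → ℝ → ℝ) (hu : ∀ i, DualFeasible (u i)) :
    ∑ b, (∏ i : Fin d, u i (w b i.castSucc)) * w b (Fin.last d) ≤ h := by
  choose q hq0 hq1 hqsep using fun i => (hu i).exists_repacking (fun b => hp0 b i.castSucc)
    (fun b => (hw b i).1) (fun b => hp1 b i)
  let L : Fin (d + 1) → ℝ := Fin.snoc (fun _ => 1) h
  let p' : V → Fin (d + 1) → ℝ := fun b => Fin.snoc (fun i => q i b) (p b (Fin.last d))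
  let w' : V → Fin (d + 1) → ℝ :=
    fun b => Fin.snoc (fun i => u i (w b i.castSucc)) (w b (Fin.last d))
  have hw' : ∀ b i, 0 ≤ w' b i := fun b => Fin.lastCases (by simpa [w'] using hwd b)
    fun i => by simpa [w'] using ((hu i).1 _ (hw b i)).1
  have hp' : ∀ b i, 0 ≤ p' b i := fun b => Fin.lastCases (by simpa [p'] using hp0 b _)
    fun i => by simpa [p'] using hq0 i b
  have hpL : ∀ b i, p' b i + w' b i ≤ L i := fun b => Fin.lastCases
    (by simpa [p', w', L] using hph b) fun i => by simpa [p', w', L] using hq1 i b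
  have hL : ∀ i, 0 ≤ L i := Fin.lastCases (by simpa [L] using hh.le) fun i => by simp [L]
  have hsep : ∀ b c, b ≠ c → ∃ i, p' b i + w' b i ≤ p' c i ∨ p' c i + w' c i ≤ p' b i := by
    intro b c hbc
    obtain ⟨i, hi⟩ := hdisj b c hbc
    induction i using Fin.lastCases with
    | last => exact ⟨Fin.last d, by simpa [p', w'] using hi⟩
    | cast i => exact ⟨i.castSucc, by simpa [p', w'] using hi.imp (hqsep i b c) (hqsep i c b)⟩
  simpa [Fin.prod_univ_castSucc, w', L] using sum_prod_le_prod_of_pairwise_separated (S := univ)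
    (fun b _ => hw' b) (fun b _ => hp' b) (fun b _ => hpL b) hL fun b _ c _ => hsep b c
end

section
/- Let V be a finite set of boxes with size function w : V → [0,1]^d, and suppose V can be partitioned into m parts V_1, …, V_m such that each (V_j, w) admits an orthogonal packing into the unit cube [0,1]^d. Then for all dual feasible functions u_1, …, u_d: ⌈∑_{b∈V} ∏_{i=1}^d u_i(w_i(b))⌉ ≤ m. In particular, the ceiling of the transformed total volume is a lower bound for the orthogonal bin packing instance (V,w) with unit-cube containers. -/
open Set

section Chain

variable {V : Type*} (q v : V → ℝ) (u : ℝ → ℝ)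

/-- `IsChainSum q v u t s`: `s` is the `u`-weight `∑ u (v b)` of a chain of intervals
`[q b, q b + v b]`, each ending before the next begins and the last one before `t`. -/
inductive IsChainSum : ℝ → ℝ → Prop
  | nil (t : ℝ) : IsChainSum t 0
  | snoc {s t : ℝ} (b : V) : IsChainSum (q b) s → q b + v b ≤ t → IsChainSum t (s + u (v b))

variable {q v u}

theorem IsChainSum.add_sum_le_one (hu : DualFeasible u) (hq : ∀ b, 0 ≤ q b)
    (hv : ∀ b, 0 ≤ v b) {t s : ℝ} (hs : IsChainSum q v u t s) (ht : 0 ≤ t) :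
    ∀ {n : ℕ} (y : Fin n → ℝ), (∀ j, y j ∈ Icc 0 1) → t + ∑ j, y j ≤ 1 →
      s + ∑ j, u (y j) ≤ 1 := by
  induction hs with
  | nil t =>
    intro n y hy hty
    simpa using hu.2 n y hy (by linarith)
  | @snoc s t b _ hbt ih =>
    intro n y hy hty
    have hy_sum : 0 ≤ ∑ j, y j := Finset.sum_nonneg fun j _ => (hy j).1
    have hvb : v b ∈ Icc 0 1 := ⟨hv b, by linarith [hq b]⟩
    have := ih (hq b) (Fin.cons (v b) y) (Fin.cases hvb hy) (by rw [Fin.sum_cons]; linarith)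
    simp only [Fin.sum_univ_succ, Fin.cons_zero, Fin.cons_succ] at this
    linarith

theorem DualFeasible.exists_placement (hu : DualFeasible u) (hq : ∀ b, 0 ≤ q b)
    (hv : ∀ b, 0 ≤ v b) (hqv : ∀ b, q b + v b ≤ 1) :
    ∃ q' : V → ℝ, (∀ b, 0 ≤ q' b ∧ q' b + u (v b) ≤ 1) ∧
      ∀ b c, q b + v b ≤ q c → q' b + u (v b) ≤ q' c := by
  set S : V → Set ℝ := fun b => {s | IsChainSum q v u (q b) s}
  have hS_le : ∀ b, ∀ s ∈ S b, s + u (v b) ≤ 1 := fun b s hs => by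
    simpa using hs.add_sum_le_one hu hq hv (hq b) (fun _ : Fin 1 => v b)
      (fun _ => ⟨hv b, by linarith [hq b, hqv b]⟩) (by simpa using hqv b)
  have hS_bdd : ∀ b, BddAbove (S b) := fun b => ⟨1, fun s hs => by
    simpa using hs.add_sum_le_one hu hq hv (hq b) (fun _ : Fin 0 => 0) (fun j => j.elim0)
      (by rw [Fin.sum_univ_zero, add_zero]; linarith [hv b, hqv b])⟩
  have hS_zero : ∀ b, (0 : ℝ) ∈ S b := fun b => IsChainSum.nil _
  refine ⟨fun b => sSup (S b), fun b => ⟨le_csSup (hS_bdd b) (hS_zero b), ?_⟩, ?_⟩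
  · have := csSup_le ⟨0, hS_zero b⟩ fun s hs => le_sub_iff_add_le.2 (hS_le b s hs)
    linarith
  · intro b c hbc
    have := csSup_le ⟨0, hS_zero b⟩ fun s hs =>
      le_sub_iff_add_le.2 (le_csSup (hS_bdd c) (IsChainSum.snoc b hs hbc))
    linarith

end Chain

/-- `p b` is the lower corner and `w b` the size of box `b`. -/
structure IsUnitCubePacking {V ι : Type*} (p w : V → ι → ℝ) : Prop where
  nonneg : ∀ b i, 0 ≤ p b i
  add_le_one : ∀ b i, p b i + w b i ≤ 1
  separated : Pairwise fun b c => ∃ i, p b i + w b i ≤ p c i ∨ p c i + w c i ≤ p b i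

namespace IsUnitCubePacking

variable {V ι : Type*} {p w : V → ι → ℝ}

theorem width_le_one (hP : IsUnitCubePacking p w) (b : V) (i : ι) : w b i ≤ 1 := by
  linarith [hP.nonneg b i, hP.add_le_one b i]

theorem exists_update [DecidableEq ι] (hP : IsUnitCubePacking p w) (hw : ∀ b i, 0 ≤ w b i)
    {u : ℝ → ℝ} (hu : DualFeasible u) (k : ι) :
    ∃ p', IsUnitCubePacking p' fun b => Function.update (w b) k (u (w b k)) := by
  obtain ⟨q', hq'_mem, hq'_mono⟩ := hu.exists_placement (q := fun b => p b k)
    (fun b => hP.nonneg b k) (fun b => hw b k) (fun b => hP.add_le_one b k)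
  refine ⟨fun b => Function.update (p b) k (q' b), ⟨fun b i => ?_, fun b i => ?_, ?_⟩⟩
  · rcases eq_or_ne i k with rfl | hik
    · simpa using (hq'_mem b).1
    · simpa [hik] using hP.nonneg b i
  · rcases eq_or_ne i k with rfl | hik
    · simpa using (hq'_mem b).2
    · simpa [hik] using hP.add_le_one b i
  · intro b c hbc
    obtain ⟨i, hi⟩ := hP.separated hbc
    refine ⟨i, ?_⟩
    rcases eq_or_ne i k with rfl | hik
    · simpa using hi.imp (hq'_mono b c) (hq'_mono c b)
    · simpa [hik] using hi

theorem exists_map_dualFeasible [Fintype ι] (hP : IsUnitCubePacking p w)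
    (hw : ∀ b i, 0 ≤ w b i) (u : ι → ℝ → ℝ) (hu : ∀ i, DualFeasible (u i)) :
    ∃ p', IsUnitCubePacking p' fun b i => u i (w b i) := by
  classical
  have hu_nonneg : ∀ b i, 0 ≤ u i (w b i) := fun b i =>
    ((hu i).1 _ ⟨hw b i, hP.width_le_one b i⟩).1
  suffices ∀ s : Finset ι, ∃ p', IsUnitCubePacking p' fun b i => if i ∈ s then u i (w b i)
      else w b i by
    simpa using this Finset.univ
  intro s
  induction s using Finset.induction_on with
  | empty => exact ⟨p, by simpa using hP⟩
  | @insert a s ha ih =>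
    obtain ⟨p', hP'⟩ := ih
    have hws : ∀ b i, 0 ≤ if i ∈ s then u i (w b i) else w b i := fun b i => by
      split_ifs
      exacts [hu_nonneg b i, hw b i]
    obtain ⟨p'', hP''⟩ := hP'.exists_update hws (hu a) a
    refine ⟨p'', ?_⟩
    convert hP'' using 2 with b
    ext i
    rcases eq_or_ne i a with rfl | hia <;> simp [*]

open MeasureTheory in
theorem sum_prod_le_one [Fintype V] [Fintype ι] (hP : IsUnitCubePacking p w)
    (hw : ∀ b i, 0 ≤ w b i) : ∑ b, ∏ i, w b i ≤ 1 := by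
  set box : V → Set (ι → ℝ) := fun b => univ.pi fun i => Ico (p b i) (p b i + w b i)
  have hbox_vol : ∀ b, volume (box b) = ENNReal.ofReal (∏ i, w b i) := fun b => by
    simp [box, Real.volume_pi_Ico, ENNReal.ofReal_prod_of_nonneg fun i _ => hw b i]
  have hbox_disj : Pairwise (Function.onFun Disjoint box) := fun b c hbc => by
    obtain ⟨i, hi⟩ := hP.separated hbc
    refine disjoint_left.2 fun x hxb hxc => ?_
    have hb := hxb i (mem_univ i)
    have hc := hxc i (mem_univ i)
    simp only [mem_Ico] at hb hc
    rcases hi with h | h <;> linarith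
  have hbox_sub : (⋃ b, box b) ⊆ univ.pi fun _ => Ico (0 : ℝ) 1 := by
    simp only [iUnion_subset_iff]
    intro b x hx i _
    have := hx i (mem_univ i)
    simp only [mem_Ico] at this ⊢
    constructor <;> linarith [hP.nonneg b i, hP.add_le_one b i]
  have : ∑ b, volume (box b) ≤ 1 := by
    rw [← tsum_fintype (L := .unconditional V), ← measure_iUnion hbox_disj
      fun b => MeasurableSet.univ_pi fun i => measurableSet_Ico]
    simpa [Real.volume_pi_Ico] using measure_mono (μ := volume) hbox_sub
  rw [← ENNReal.ofReal_le_one, ENNReal.ofReal_sum_of_nonneg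
    fun b _ => Finset.prod_nonneg fun i _ => hw b i]
  simpa [hbox_vol] using this

theorem sum_prod_dualFeasible_le_one [Fintype V] [Fintype ι] (hP : IsUnitCubePacking p w)
    (hw : ∀ b i, 0 ≤ w b i) (u : ι → ℝ → ℝ) (hu : ∀ i, DualFeasible (u i)) :
    ∑ b, ∏ i, u i (w b i) ≤ 1 := by
  obtain ⟨p', hP'⟩ := hP.exists_map_dualFeasible hw u hu
  exact hP'.sum_prod_le_one fun b i => ((hu i).1 _ ⟨hw b i, hP.width_le_one b i⟩).1

end IsUnitCubePacking

/-- Bin packing bound: if the boxes `(V,w)` can be partitioned into `m` parts via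
`f : V → Fin m` such that each part admits an orthogonal packing into the unit cube
`[0,1]^d`, then for all dual feasible functions `u₁, …, u_d` the ceiling of the
transformed total volume is at most `m`. -/
theorem binPacking_lowerBound {V : Type*} [Fintype V] {d m : ℕ}
    (w : V → Fin d → ℝ) (hw : ∀ b i, w b i ∈ Set.Icc (0 : ℝ) 1)
    (f : V → Fin m)
    (hpack : ∀ j : Fin m, ∃ p : V → Fin d → ℝ,
      (∀ b, f b = j → ∀ i, 0 ≤ p b i ∧ p b i + w b i ≤ 1) ∧
      ∀ b c : V, f b = j → f c = j → b ≠ c →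
        ∃ i, p b i + w b i ≤ p c i ∨ p c i + w c i ≤ p b i)
    (u : Fin d → ℝ → ℝ) (hu : ∀ i, DualFeasible (u i)) :
    ⌈∑ b, ∏ i, u i (w b i)⌉ ≤ (m : ℤ) := by
  have hbin : ∀ j, ∑ b ∈ Finset.univ.filter (f · = j), ∏ i, u i (w b i) ≤ 1 := fun j => by
    obtain ⟨p, hp_mem, hp_sep⟩ := hpack j
    have hP : IsUnitCubePacking (fun (b : {b // f b = j}) => p b) (fun b => w b) :=
      ⟨fun b i => (hp_mem b b.2 i).1, fun b i => (hp_mem b b.2 i).2,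
        fun b c hbc => hp_sep b c b.2 c.2 (Subtype.coe_ne_coe.2 hbc)⟩
    rw [Finset.sum_subtype (p := (f · = j)) _ (by simp)]
    exact hP.sum_prod_dualFeasible_le_one (fun b i => (hw b i).1) u hu
  rw [Int.ceil_le, ← Finset.sum_fiberwise Finset.univ f]
  calc ∑ j, ∑ b ∈ Finset.univ.filter (f · = j), ∏ i, u i (w b i)
      ≤ ∑ _j : Fin m, (1 : ℝ) := Finset.sum_le_sum fun j _ => hbin j
    _ = m := by simp
end

section
/- Let V be a finite set of boxes with size function w : V → [0,1]^3 and let p, q ∈ (0,1/2]. Define J_1(p,q) = {b ∈ V : w_1(b) > 1−p and w_2(b) > 1−q} and J_2(p,q) = {b ∈ V \ J_1(p,q) : w_1(b) > p and w_2(b) > q}. Then ∑_{b∈J_1(p,q)} w_3(b) + ∑_{b∈J_2(p,q)} w_1(b)·w_2(b)·w_3(b) ≤ ∑_{b∈V} U^(p)(w_1(b))·U^(q)(w_2(b))·w_3(b); i.e., the bound L'^(p,q)(V,w) = ⌈∑_{b∈V} U^(p)(w_1(b))·U^(q)(w_2(b))·w_3(b)⌉ dominates the Martello–Pisinger–Vigo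 partial bound L^(p,q)(V,w) = ⌈∑_{b∈J_1(p,q)} w_3(b) + ∑_{b∈J_2(p,q)} w_1(b)·w_2(b)·w_3(b)⌉. -/
/-- The dual feasible function `U^(ε)`: `U^(ε)(x) = 1` for `x > 1 - ε`,
`U^(ε)(x) = x` for `ε ≤ x ≤ 1 - ε`, and `U^(ε)(x) = 0` for `x < ε`. -/
noncomputable def Ufn (ε x : ℝ) : ℝ :=
  if 1 - ε < x then 1
  else if x < ε then 0
  else x

/-- The bound `L'^(p,q)` based on the conservative scale
`(U^(p) ∘ w₁, U^(q) ∘ w₂, w₃)` dominates the Martello–Pisinger–Vigo partial bound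
`L^(p,q)` for three-dimensional bin packing. -/
theorem MPV_bound_dominated {V : Type*} [Fintype V] [DecidableEq V]
    (w₁ w₂ w₃ : V → ℝ)
    (hw₁ : ∀ b, w₁ b ∈ Set.Icc (0 : ℝ) 1) (hw₂ : ∀ b, w₂ b ∈ Set.Icc (0 : ℝ) 1)
    (hw₃ : ∀ b, w₃ b ∈ Set.Icc (0 : ℝ) 1)
    (p q : ℝ) (hp : p ∈ Set.Ioc (0 : ℝ) (1 / 2)) (hq : q ∈ Set.Ioc (0 : ℝ) (1 / 2))
    (J₁ J₂ : Finset V)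
    (hJ₁ : ∀ b, b ∈ J₁ ↔ 1 - p < w₁ b ∧ 1 - q < w₂ b)
    (hJ₂ : ∀ b, b ∈ J₂ ↔ b ∉ J₁ ∧ p < w₁ b ∧ q < w₂ b) :
    (∑ b ∈ J₁, w₃ b + ∑ b ∈ J₂, w₁ b * w₂ b * w₃ b
      ≤ ∑ b, Ufn p (w₁ b) * Ufn q (w₂ b) * w₃ b) ∧
    ⌈∑ b ∈ J₁, w₃ b + ∑ b ∈ J₂, w₁ b * w₂ b * w₃ b⌉
      ≤ ⌈∑ b, Ufn p (w₁ b) * Ufn q (w₂ b) * w₃ b⌉ := by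
  have hUnn : ∀ ε x : ℝ, 0 ≤ x → 0 ≤ Ufn ε x := by
    intro ε x hx
    unfold Ufn
    split_ifs <;> [norm_num; exact le_refl 0; exact hx]
  have hUge : ∀ ε x : ℝ, ε < x → x ≤ 1 → x ≤ Ufn ε x := by
    intro ε x hεx hx
    unfold Ufn
    split_ifs with h1 h2
    · exact hx
    · linarith
    · exact le_refl x
  have hterm_nn : ∀ b, 0 ≤ Ufn p (w₁ b) * Ufn q (w₂ b) * w₃ b := by
    intro b
    exact mul_nonneg (mul_nonneg (hUnn p _ (hw₁ b).1) (hUnn q _ (hw₂ b).1)) (hw₃ b).1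
  have hdisj : Disjoint J₁ J₂ := by
    rw [Finset.disjoint_left]
    intro b hb1 hb2
    exact ((hJ₂ b).1 hb2).1 hb1
  have h1 : ∀ b ∈ J₁, w₃ b ≤ Ufn p (w₁ b) * Ufn q (w₂ b) * w₃ b := by
    intro b hb
    obtain ⟨h1, h2⟩ := (hJ₁ b).1 hb
    have e1 : Ufn p (w₁ b) = 1 := by unfold Ufn; rw [if_pos h1]
    have e2 : Ufn q (w₂ b) = 1 := by unfold Ufn; rw [if_pos h2]
    rw [e1, e2]; linarith
  have h2 : ∀ b ∈ J₂, w₁ b * w₂ b * w₃ b ≤ Ufn p (w₁ b) * Ufn q (w₂ b) * w₃ b := by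
    intro b hb
    obtain ⟨_, hp1, hq1⟩ := (hJ₂ b).1 hb
    have e1 : w₁ b ≤ Ufn p (w₁ b) := hUge p _ hp1 (hw₁ b).2
    have e2 : w₂ b ≤ Ufn q (w₂ b) := hUge q _ hq1 (hw₂ b).2
    have : w₁ b * w₂ b ≤ Ufn p (w₁ b) * Ufn q (w₂ b) :=
      mul_le_mul e1 e2 (hw₂ b).1 (hUnn p _ (hw₁ b).1)
    exact mul_le_mul_of_nonneg_right this (hw₃ b).1
  have key : ∑ b ∈ J₁, w₃ b + ∑ b ∈ J₂, w₁ b * w₂ b * w₃ b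
      ≤ ∑ b, Ufn p (w₁ b) * Ufn q (w₂ b) * w₃ b := by
    calc ∑ b ∈ J₁, w₃ b + ∑ b ∈ J₂, w₁ b * w₂ b * w₃ b
        ≤ ∑ b ∈ J₁, Ufn p (w₁ b) * Ufn q (w₂ b) * w₃ b
          + ∑ b ∈ J₂, Ufn p (w₁ b) * Ufn q (w₂ b) * w₃ b :=
          add_le_add (Finset.sum_le_sum h1) (Finset.sum_le_sum h2)
      _ = ∑ b ∈ J₁ ∪ J₂, Ufn p (w₁ b) * Ufn q (w₂ b) * w₃ b :=
          (Finset.sum_union hdisj).symm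
      _ ≤ ∑ b, Ufn p (w₁ b) * Ufn q (w₂ b) * w₃ b :=
          Finset.sum_le_sum_of_subset_of_nonneg (Finset.subset_univ _)
            (fun b _ _ => hterm_nn b)
  exact ⟨key, Int.ceil_le_ceil key⟩
end
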